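/- In Cl_5, for all real numbers μ₁₂, μ₃₄, the element x = μ₁₂ • (e₅*e₁*e₂) + μ₃₄ • (e₅*e₃*e₄) satisfies x * x = (μ₁₂² + μ₃₄²) • 1 - (2·μ₁₂·μ₃₄) • (e₁*e₂*e₃*e₄), and x is a unit of Cl_5 if and only if μ₁₂² ≠ μ₃₄². (x is 4× the invariant Dirac operator of the metric nilpotent Lie algebra 𝒩₅,₆ = (0,0,0,0,12+34) with de⁵ = μ₁₂ e¹² + μ₃₄ e³⁴; since Cl_5 is a simple matrix algebra, such a metric carries a left-invariant harmonic spinor exactly when μ₁₂ = ±μ₃₄, as asserted in the paper's Theorem on 5-dimensional nilmanifolds.) -/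
import Mathlib


open scoped BigOperators

/-- The negative-definite quadratic form `Q v = -∑ i, (v i)^2` on `EuclideanSpace ℝ (Fin n)`. -/
noncomputable def Q (n : ℕ) : QuadraticForm ℝ (EuclideanSpace ℝ (Fin n)) :=
  QuadraticMap.ofPolar (fun v => -∑ i, v i ^ 2)
    (fun a v => by
      simp only [PiLp.smul_apply, smul_eq_mul, mul_pow]
      rw [← Finset.mul_sum]
      ring)
    (fun x x' y => by
      have h : ∀ (u w : EuclideanSpace ℝ (Fin n)),
          QuadraticMap.polar (fun v : EuclideanSpace ℝ (Fin n) => -∑ i, v i ^ 2) u w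
            = -(2 * ∑ i, u i * w i) := by
        intro u w
        have hsq : ∀ i, (u i + w i) ^ 2 = u i ^ 2 + w i ^ 2 + 2 * (u i * w i) := fun i => by ring
        simp_rw [QuadraticMap.polar, PiLp.add_apply, hsq, Finset.sum_add_distrib,
          ← Finset.mul_sum]
        ring
      simp_rw [h, PiLp.add_apply, add_mul, Finset.sum_add_distrib]
      ring)
    (fun a x y => by
      have h : ∀ (u w : EuclideanSpace ℝ (Fin n)),
          QuadraticMap.polar (fun v : EuclideanSpace ℝ (Fin n) => -∑ i, v i ^ 2) u w
            = -(2 * ∑ i, u i * w i) := by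
        intro u w
        have hsq : ∀ i, (u i + w i) ^ 2 = u i ^ 2 + w i ^ 2 + 2 * (u i * w i) := fun i => by ring
        simp_rw [QuadraticMap.polar, PiLp.add_apply, hsq, Finset.sum_add_distrib,
          ← Finset.mul_sum]
        ring
      simp_rw [h, PiLp.smul_apply, smul_eq_mul, mul_assoc, ← Finset.mul_sum]
      ring)

/-- The image in the Clifford algebra `Cl_n` of the `i`-th standard basis vector. -/
noncomputable def e {n : ℕ} (i : Fin n) : CliffordAlgebra (Q n) :=
  CliffordAlgebra.ι (Q n) (EuclideanSpace.single i 1)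


/-! ### Auxiliary machinery -/

section Aux

lemma Q_apply' {n : ℕ} (v : EuclideanSpace ℝ (Fin n)) : Q n v = -∑ i, v i ^ 2 := rfl

lemma single_sq_sum' {n : ℕ} (i : Fin n) : ∑ j, (EuclideanSpace.single i (1:ℝ)) j ^ 2 = 1 := by
  simp [EuclideanSpace.single_apply]

lemma esq {n : ℕ} (i : Fin n) : e i * e i = -1 := by
  rw [e, CliffordAlgebra.ι_sq_scalar, Q_apply', single_sq_sum']
  simp

lemma eswap {n : ℕ} {i j : Fin n} (h : i ≠ j) : e i * e j = -(e j * e i) := by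
  have key := CliffordAlgebra.ι_mul_ι_add_swap (Q := Q n)
    (EuclideanSpace.single i 1) (EuclideanSpace.single j 1)
  have hp : QuadraticMap.polar (Q n) (EuclideanSpace.single i 1) (EuclideanSpace.single j 1) = 0 := by
    rw [QuadraticMap.polar, Q_apply', Q_apply', Q_apply', single_sq_sum', single_sq_sum']
    have hs : ∑ k, ((EuclideanSpace.single i (1:ℝ)) + EuclideanSpace.single j 1 :
        EuclideanSpace ℝ (Fin n)) k ^ 2 = 2 := by
      have step : ∀ k ∈ Finset.univ, ((EuclideanSpace.single i (1:ℝ)) + EuclideanSpace.single j 1 :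
          EuclideanSpace ℝ (Fin n)) k ^ 2
          = (if k = i then (1:ℝ) else 0) + (if k = j then 1 else 0) := by
        intro k _
        simp only [PiLp.add_apply, EuclideanSpace.single_apply]
        rcases eq_or_ne k i with rfl|hi <;> rcases eq_or_ne k j with rfl|hj <;> simp_all
      rw [Finset.sum_congr rfl step, Finset.sum_add_distrib]
      norm_num
    rw [hs]; ring
  rw [hp, map_zero] at key
  have := neg_eq_of_add_eq_zero_left key
  rw [e, e]
  exact this.symm

lemma esq' {n : ℕ} (i : Fin n) (y : CliffordAlgebra (Q n)) : e i * (e i * y) = -y := by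
  rw [← mul_assoc, esq, neg_one_mul]

lemma eswap' {n : ℕ} {i j : Fin n} (h : i ≠ j) (y : CliffordAlgebra (Q n)) :
    e i * (e j * y) = -(e j * (e i * y)) := by
  rw [← mul_assoc, eswap h, ← mul_assoc, neg_mul]

open Matrix Complex in
/-- Gamma matrices: an explicit representation of `Cl₅` on `ℂ⁴`. -/
def g : Fin 5 → Matrix (Fin 4) (Fin 4) ℂ :=
  ![!![0,0,I,0; 0,0,0,I; I,0,0,0; 0,I,0,0],
    !![0,0,1,0; 0,0,0,1; -1,0,0,0; 0,-1,0,0],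
    !![0,I,0,0; I,0,0,0; 0,0,0,-I; 0,0,-I,0],
    !![0,1,0,0; -1,0,0,0; 0,0,0,-1; 0,0,1,0],
    !![I,0,0,0; 0,-I,0,0; 0,0,-I,0; 0,0,0,I]]

open Matrix Complex in
set_option maxHeartbeats 2000000 in
lemma g_omega : g 0 * g 1 * (g 2 * g 3) = !![-1,0,0,0; 0,1,0,0; 0,0,1,0; 0,0,0,-1] := by
  ext a b
  fin_cases a <;> fin_cases b <;>
    simp [g, Matrix.mul_apply, Fin.sum_univ_four, Complex.I_mul_I,
      Matrix.vecHead, Matrix.vecTail]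

open Matrix Complex in
set_option maxHeartbeats 2000000 in
lemma fv_explicit (v : EuclideanSpace ℝ (Fin 5)) :
    ∑ i, v i • g i =
      !![v 4*I, v 3+v 2*I, v 1+v 0*I, 0;
         -v 3+v 2*I, -(v 4*I), 0, v 1+v 0*I;
         -v 1+v 0*I, 0, -(v 4*I), -(v 3)-v 2*I;
         0, -v 1+v 0*I, v 3-v 2*I, v 4*I] := by
  ext a b
  fin_cases a <;> fin_cases b <;>
    simp [Fin.sum_univ_five, g, Matrix.vecHead, Matrix.vecTail, Complex.real_smul] <;>
    ring

set_option maxRecDepth 10000 in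
set_option maxHeartbeats 2000000 in
noncomputable def f : EuclideanSpace ℝ (Fin 5) →ₗ[ℝ] Matrix (Fin 4) (Fin 4) ℂ where
  toFun v := ∑ i, v i • g i
  map_add' u w := by
    simp only [PiLp.add_apply, add_smul, Finset.sum_add_distrib]
  map_smul' a v := by
    simp only [PiLp.smul_apply, smul_eq_mul, RingHom.id_apply, Finset.smul_sum, mul_smul]

open Matrix Complex in
set_option maxHeartbeats 2000000 in
lemma hf (v : EuclideanSpace ℝ (Fin 5)) :
    f v * f v = algebraMap ℝ (Matrix (Fin 4) (Fin 4) ℂ) (Q 5 v) := by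
  have hfv : f v = ∑ i, v i • g i := rfl
  rw [hfv, fv_explicit, Q_apply']
  ext a b
  fin_cases a <;> fin_cases b <;>
    simp [Matrix.mul_apply, Fin.sum_univ_four, Fin.sum_univ_five,
      Matrix.algebraMap_matrix_apply, Matrix.vecHead, Matrix.vecTail, Complex.ext_iff] <;>
    (try ring) <;> simp [← Complex.ofReal_pow] <;> ring

/-- The representation `Cl₅ → M₄(ℂ)`. -/
noncomputable def φ : CliffordAlgebra (Q 5) →ₐ[ℝ] Matrix (Fin 4) (Fin 4) ℂ :=
  CliffordAlgebra.lift (Q 5) ⟨f, hf⟩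

lemma φ_e (i : Fin 5) : φ (e i) = g i := by
  rw [e, φ, CliffordAlgebra.lift_ι_apply]
  show ∑ j, (EuclideanSpace.single i (1:ℝ)) j • g j = g i
  simp [EuclideanSpace.single_apply, ite_smul]

open Matrix Complex in
lemma φ_omega : φ (e 0 * e 1 * e 2 * e 3) =
    !![-1,0,0,0; 0,1,0,0; 0,0,1,0; 0,0,0,-1] := by
  rw [_root_.map_mul, _root_.map_mul, _root_.map_mul, φ_e, φ_e, φ_e, φ_e, mul_assoc, g_omega]

end Aux
/-- **The `𝒩₅,₆` case.** In `Cl₅`, `x = μ₁₂ • (e₅e₁e₂) + μ₃₄ • (e₅e₃e₄)` satisfies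
`x * x = (μ₁₂² + μ₃₄²) • 1 - (2 μ₁₂ μ₃₄) • (e₁e₂e₃e₄)`, and `x` is a unit iff `μ₁₂² ≠ μ₃₄²`. -/
theorem clifford_N56_dirac (μ₁₂ μ₃₄ : ℝ) (x : CliffordAlgebra (Q 5))
    (hx : x = μ₁₂ • (e (4 : Fin 5) * e 0 * e 1) + μ₃₄ • (e (4 : Fin 5) * e 2 * e 3)) :
    x * x = (μ₁₂ ^ 2 + μ₃₄ ^ 2) • (1 : CliffordAlgebra (Q 5))
        - (2 * μ₁₂ * μ₃₄) • (e (0 : Fin 5) * e 1 * e 2 * e 3)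
    ∧ (IsUnit x ↔ μ₁₂ ^ 2 ≠ μ₃₄ ^ 2) := by
  -- main computation
  have h1 : x * x = (μ₁₂ ^ 2 + μ₃₄ ^ 2) • (1 : CliffordAlgebra (Q 5))
      - (2 * μ₁₂ * μ₃₄) • (e (0 : Fin 5) * e 1 * e 2 * e 3) := by
    rw [hx]
    simp only [mul_add, add_mul, smul_mul_assoc, mul_smul_comm]
    simp only [mul_assoc, esq, esq',
      eswap (show (1:Fin 5) ≠ 0 by decide), eswap' (show (1:Fin 5) ≠ 0 by decide),
      eswap (show (2:Fin 5) ≠ 0 by decide), eswap' (show (2:Fin 5) ≠ 0 by decide),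
      eswap (show (2:Fin 5) ≠ 1 by decide), eswap' (show (2:Fin 5) ≠ 1 by decide),
      eswap (show (3:Fin 5) ≠ 0 by decide), eswap' (show (3:Fin 5) ≠ 0 by decide),
      eswap (show (3:Fin 5) ≠ 1 by decide), eswap' (show (3:Fin 5) ≠ 1 by decide),
      eswap (show (3:Fin 5) ≠ 2 by decide), eswap' (show (3:Fin 5) ≠ 2 by decide),
      eswap (show (4:Fin 5) ≠ 0 by decide), eswap' (show (4:Fin 5) ≠ 0 by decide),
      eswap (show (4:Fin 5) ≠ 1 by decide), eswap' (show (4:Fin 5) ≠ 1 by decide),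
      eswap (show (4:Fin 5) ≠ 2 by decide), eswap' (show (4:Fin 5) ≠ 2 by decide),
      eswap (show (4:Fin 5) ≠ 3 by decide), eswap' (show (4:Fin 5) ≠ 3 by decide),
      neg_mul, mul_neg, neg_neg, one_mul, mul_one]
    module
  have hω2 : (e (0 : Fin 5) * e 1 * e 2 * e 3) * (e (0 : Fin 5) * e 1 * e 2 * e 3) = 1 := by
    simp only [mul_assoc, esq, esq',
      eswap (show (1:Fin 5) ≠ 0 by decide), eswap' (show (1:Fin 5) ≠ 0 by decide),
      eswap (show (2:Fin 5) ≠ 0 by decide), eswap' (show (2:Fin 5) ≠ 0 by decide),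
      eswap (show (2:Fin 5) ≠ 1 by decide), eswap' (show (2:Fin 5) ≠ 1 by decide),
      eswap (show (3:Fin 5) ≠ 0 by decide), eswap' (show (3:Fin 5) ≠ 0 by decide),
      eswap (show (3:Fin 5) ≠ 1 by decide), eswap' (show (3:Fin 5) ≠ 1 by decide),
      eswap (show (3:Fin 5) ≠ 2 by decide), eswap' (show (3:Fin 5) ≠ 2 by decide),
      neg_mul, mul_neg, neg_neg, one_mul, mul_one]
  refine ⟨h1, ?_⟩
  set ω : CliffordAlgebra (Q 5) := e (0 : Fin 5) * e 1 * e 2 * e 3 with hω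
  constructor
  · -- unit → μ₁₂² ≠ μ₃₄²
    rintro ⟨u, hu⟩ hsq_eq
    set y : CliffordAlgebra (Q 5) := ↑u⁻¹ with hy
    have hxy : x * y = 1 := by rw [← hu, hy, ← Units.val_mul, mul_inv_cancel, Units.val_one]
    have hyx : y * x = 1 := by rw [← hu, hy, ← Units.val_mul, inv_mul_cancel, Units.val_one]
    have hx2w : (x * x) * ((μ₁₂ ^ 2 + μ₃₄ ^ 2) • (1 : CliffordAlgebra (Q 5))
        + (2 * μ₁₂ * μ₃₄) • ω) = 0 := by
      rw [h1]
      simp only [sub_mul, mul_add, smul_mul_assoc, mul_smul_comm, one_mul, mul_one, hω2]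
      match_scalars <;> first
        | ring1
        | linear_combination (μ₃₄ ^ 2 - μ₁₂ ^ 2) * hsq_eq
        | linear_combination (μ₁₂ ^ 2 - μ₃₄ ^ 2) * hsq_eq
        | linear_combination (2 * (μ₃₄ ^ 2 - μ₁₂ ^ 2)) * hsq_eq
        | linear_combination (2 * (μ₁₂ ^ 2 - μ₃₄ ^ 2)) * hsq_eq
    have hyyxx : (y * y) * (x * x) = 1 := by
      have : (y * y) * (x * x) = y * ((y * x) * x) := by noncomm_ring
      rw [this, hyx, one_mul, hyx]
    have hzero : (μ₁₂ ^ 2 + μ₃₄ ^ 2) • (1 : CliffordAlgebra (Q 5))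
        + (2 * μ₁₂ * μ₃₄) • ω = 0 := by
      calc (μ₁₂ ^ 2 + μ₃₄ ^ 2) • (1 : CliffordAlgebra (Q 5)) + (2 * μ₁₂ * μ₃₄) • ω
          = ((y * y) * (x * x)) * ((μ₁₂ ^ 2 + μ₃₄ ^ 2) • (1 : CliffordAlgebra (Q 5))
              + (2 * μ₁₂ * μ₃₄) • ω) := by rw [hyyxx, one_mul]
        _ = (y * y) * ((x * x) * ((μ₁₂ ^ 2 + μ₃₄ ^ 2) • (1 : CliffordAlgebra (Q 5))
              + (2 * μ₁₂ * μ₃₄) • ω)) := by rw [mul_assoc]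
        _ = 0 := by rw [hx2w, mul_zero]
    have hm := congrArg φ hzero
    rw [map_add, map_smul, map_smul, map_one, map_zero, hω, φ_omega] at hm
    have h00 := congrFun (congrFun hm 0) 0
    have h11 := congrFun (congrFun hm 1) 1
    simp [Matrix.add_apply, Matrix.smul_apply, Matrix.one_apply, Complex.real_smul,
      Complex.ext_iff, ← Complex.ofReal_pow] at h00 h11
    have ha : μ₁₂ ^ 2 + μ₃₄ ^ 2 = 0 := by linarith
    have hμ : μ₁₂ = 0 := by nlinarith [sq_nonneg μ₁₂, sq_nonneg μ₃₄]
    have hν : μ₃₄ = 0 := by nlinarith [sq_nonneg μ₁₂, sq_nonneg μ₃₄]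
    have hx0 : x = 0 := by rw [hx, hμ, hν]; simp
    have h10 : (1 : CliffordAlgebra (Q 5)) = 0 := by
      rw [← hyx, hx0, mul_zero]
    have := congrArg φ h10
    rw [map_one, map_zero] at this
    exact one_ne_zero this
  · -- μ₁₂² ≠ μ₃₄² → unit
    intro hne
    set k : ℝ := (μ₁₂ ^ 2 - μ₃₄ ^ 2) ^ 2 with hk
    have hk0 : k ≠ 0 := pow_ne_zero _ (sub_ne_zero.mpr hne)
    set z : CliffordAlgebra (Q 5) :=
      k⁻¹ • ((μ₁₂ ^ 2 + μ₃₄ ^ 2) • (1 : CliffordAlgebra (Q 5)) + (2 * μ₁₂ * μ₃₄) • ω) with hz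
    have hr : (x * x) * z = 1 := by
      rw [h1, hz]
      simp only [mul_smul_comm, smul_mul_assoc, sub_mul, mul_add, one_mul, mul_one, hω2]
      match_scalars <;> field_simp <;> ring
    have hl : z * (x * x) = 1 := by
      rw [h1, hz]
      simp only [mul_smul_comm, smul_mul_assoc, sub_mul, mul_sub, add_mul, mul_add,
        one_mul, mul_one, hω2]
      match_scalars <;> field_simp <;> ring
    have hxu : x * (x * z) = 1 := by rw [← mul_assoc]; exact hr
    have hux : (z * x) * x = 1 := by rw [mul_assoc]; exact hl
    have heq2 : z * x = x * z := by
      calc z * x = (z * x) * (x * (x * z)) := by rw [hxu, mul_one]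
        _ = ((z * x) * x) * (x * z) := by noncomm_ring
        _ = x * z := by rw [hux, one_mul]
    exact ⟨⟨x, x * z, hxu, by rw [← heq2]; exact hux⟩, rfl⟩
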